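/- Let G be a finite group, H a subgroup, and β ∈ Irr(H) with β(1) > 1 such that β^G is irreducible of degree m(G). Then β(1) = m(H), i.e., β is a minimal non-linear irreducible character of H. -/

import Mathlib

open scoped BigOperators
open CategoryTheory

noncomputable section

/-- `χ : G → ℂ` is the character of some finite-dimensional complex representation. -/
def IsChar (G : Type) [Group G] (χ : G → ℂ) : Prop :=
  ∃ V : FDRep ℂ G, χ = V.character

/-- `χ : G → ℂ` is the character of an irreducible (simple) finite-dimensional
complex representation. -/
def IsIrrChar (G : Type) [Group G] (χ : G → ℂ) : Prop :=
  ∃ V : FDRep ℂ G, Simple V ∧ χ = V.character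

/-- The minimal degree `m(G)` of a non-linear irreducible complex character of `G`. -/
def minDeg (G : Type) [Group G] : ℕ :=
  sInf {n : ℕ | 1 < n ∧ ∃ χ : G → ℂ, IsIrrChar G χ ∧ χ 1 = (n : ℂ)}

/-- The kernel of a character, as a set: `{g | χ g = χ 1}`. -/
def charKerSet {G : Type} [Group G] (χ : G → ℂ) : Set G := {g | χ g = χ 1}

/-- The kernel of (the representation affording) a character, as a subgroup. -/
def repKer {G : Type} [Group G] (V : FDRep ℂ G) : Subgroup G :=
  (Representation.asGroupHom V.ρ).ker

instance {G : Type} [Group G] (V : FDRep ℂ G) : (repKer V).Normal :=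
  (Representation.asGroupHom V.ρ).normal_ker

open Classical in
/-- The character of `G` induced from the class function `β` of the subgroup `H`. -/
def indChar {G : Type} [Group G] [Fintype G] (H : Subgroup G) (β : H → ℂ) : G → ℂ :=
  fun g => (Nat.card H : ℂ)⁻¹ *
    ∑ x : G, if h : x⁻¹ * g * x ∈ H then β ⟨x⁻¹ * g * x, h⟩ else 0

/-- A character of `G` is primitive if it is not induced from a character
of a proper subgroup. -/
def IsPrimitiveChar (G : Type) [Group G] [Fintype G] (χ : G → ℂ) : Prop :=
  ∀ H : Subgroup G, H ≠ ⊤ → ∀ β : H → ℂ, IsChar H β → indChar H β ≠ χ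

/-- The usual inner product of class functions. -/
def charInner (G : Type) [Group G] [Fintype G] (φ ψ : G → ℂ) : ℂ :=
  (Nat.card G : ℂ)⁻¹ * ∑ g : G, φ g * (starRingEnd ℂ) (ψ g)

/-- `χ` is a sum of linear characters of `G`. -/
def IsSumOfLinear (G : Type) [Group G] (χ : G → ℂ) : Prop :=
  ∃ s : Multiset (G → ℂ), (∀ β ∈ s, IsChar G β ∧ β 1 = 1) ∧ χ = s.sum

/-- The Fitting subgroup: the join of all nilpotent normal subgroups. -/
def fittingSubgroup (G : Type) [Group G] : Subgroup G :=
  ⨆ (N : Subgroup G) (_ : N.Normal) (_ : Group.IsNilpotent N), N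

/-- `O_p(G)`: the join of all normal `p`-subgroups. -/
def pCore (p : ℕ) (G : Type) [Group G] : Subgroup G :=
  ⨆ (N : Subgroup G) (_ : N.Normal) (_ : IsPGroup p N), N

/-- An extraspecial `p`-group: `Z(P) = P' = Φ(P)` has order `p`. -/
def IsExtraspecial (p : ℕ) (P : Type) [Group P] : Prop :=
  IsPGroup p P ∧ Subgroup.center P = commutator P ∧
    Subgroup.center P = frattini P ∧ Nat.card (Subgroup.center P) = p

/-!
Let `ψ ∈ Irr(H)` be non-linear of degree `m(H)`. Write the regular character of `G` as a sum of
irreducible characters, in which each `W ∈ Irr(G)` occurs `W(1)` times. Restricting to `H` and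
pairing with `ψ` gives `∑ W(1) ⟨W_H, ψ⟩ = [G:H] ψ(1)`, so an irreducible `W` with `⟨W_H, ψ⟩ ≠ 0`
satisfies `ψ(1) ≤ W(1) ≤ [G:H] ψ(1)`; hence `m(G) ≤ [G:H] m(H)`. Since `β^G` has degree
`[G:H] β(1) = m(G)`, this gives `β(1) ≤ m(H)`, and `m(H) ≤ β(1)` holds by minimality.
-/

open Module

universe u v

theorem LinearMap.trace_eq_trace_restrict_add {k V : Type*} [Field k] [AddCommGroup V]
    [Module k V] [FiniteDimensional k V] (f : V →ₗ[k] V) {p q : Submodule k V}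
    (hpq : IsCompl p q) (hp : Set.MapsTo f p p) (hq : Set.MapsTo f q q) :
    trace k V f = trace k p (f.restrict hp) + trace k q (f.restrict hq) := by
  have hint : DirectSum.IsInternal (fun b : Bool => cond b p q) :=
    (DirectSum.isInternal_submodule_iff_isCompl _ (i := true) (j := false) (by decide)
      (Set.ext fun b => by cases b <;> simp)).2 hpq
  have := trace_eq_sum_trace_restrict hint (f := f) (fun b => by cases b <;> assumption)
  rwa [Fintype.sum_bool] at this

namespace Representation

variable {k : Type u} {G : Type v} {V : Type u} [Field k] [Group G] [AddCommGroup V] [Module k V]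

theorem IsIrreducible.nontrivial (ρ : Representation k G V) [ρ.IsIrreducible] : Nontrivial V := by
  by_contra h
  rw [not_nontrivial_iff_subsingleton] at h
  exact bot_ne_top (α := Subrepresentation ρ)
    (Subrepresentation.toSubmodule_injective (Subsingleton.elim _ _))

theorem character_eq_add_of_isCompl [FiniteDimensional k V] {ρ : Representation k G V}
    {p q : Subrepresentation ρ} (hpq : IsCompl p q) :
    ρ.character = p.toRepresentation.character + q.toRepresentation.character := by
  funext g
  have hpq' : IsCompl p.toSubmodule q.toSubmodule :=
    ⟨disjoint_iff.2 (congrArg Subrepresentation.toSubmodule (disjoint_iff.1 hpq.disjoint)),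
      codisjoint_iff.2 (congrArg Subrepresentation.toSubmodule (codisjoint_iff.1 hpq.codisjoint))⟩
  exact LinearMap.trace_eq_trace_restrict_add (ρ g) hpq'
    (fun _ h => p.apply_mem_toSubmodule g h) (fun _ h => q.apply_mem_toSubmodule g h)

end Representation

namespace FDRep

variable {k : Type u} {G : Type v} [Field k] [Group G]

theorem injective_of_mono {V W : FDRep k G} (f : V ⟶ W) [Mono f] : Function.Injective f.hom :=
  (Rep.mono_iff_injective ((forget₂ (FDRep k G) (Rep k G)).map f)).1 inferInstance

theorem hom_comm_apply {V W : FDRep k G} (f : V ⟶ W) (g : G) (v : V) :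
    f.hom (V.ρ g v) = W.ρ g (f.hom v) :=
  ConcreteCategory.congr_hom (f.comm g) v

theorem simple_of_isIrreducible {V : Type u} [AddCommGroup V] [Module k V] [Module.Finite k V]
    (ρ : Representation k G V) [ρ.IsIrreducible] : Simple (FDRep.of ρ) := by
  have := Representation.IsIrreducible.nontrivial ρ
  refine ⟨fun {Y} f _ => ⟨fun hiso hf => ?_, fun hf => ?_⟩⟩
  · obtain ⟨v, hv⟩ := exists_ne (0 : V)
    obtain ⟨y, rfl⟩ := ((ConcreteCategory.isIso_iff_bijective f).1 hiso).2 v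
    exact hv (by rw [hf]; rfl)
  · let R : Subrepresentation ρ := ⟨LinearMap.range f.hom.hom.hom, by
      rintro g _ ⟨y, rfl⟩
      exact ⟨Y.ρ g y, hom_comm_apply f g y⟩⟩
    have hR : R ≠ ⊥ := fun h => hf (by
      ext y
      have : f y ∈ R := ⟨y, rfl⟩
      rw [h] at this
      exact this)
    have hsurj : Function.Surjective f.hom := fun v => by
      have : v ∈ R := by rw [(IsSimpleOrder.eq_bot_or_eq_top R).resolve_left hR]; trivial
      exact this
    exact (ConcreteCategory.isIso_iff_bijective f).2 ⟨injective_of_mono f, hsurj⟩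

noncomputable def res (H : Subgroup G) (V : FDRep k G) : FDRep k H :=
  FDRep.of (V.ρ.comp H.subtype)

theorem char_res (H : Subgroup G) (V : FDRep k G) (h : H) :
    (res H V).character h = V.character h := rfl

theorem finrank_pos_of_simple (V : FDRep k G) [Simple V] : 0 < finrank k V := by
  rw [finrank_pos_iff, ← not_subsingleton_iff_nontrivial]
  intro _
  exact id_nonzero V (by ext v; exact Subsingleton.elim _ _)

theorem finrank_le_of_finrank_hom_ne_zero {U V : FDRep k G} [Simple U]
    (h : finrank k (U ⟶ V) ≠ 0) : finrank k U ≤ finrank k V := by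
  have := Module.nontrivial_of_finrank_pos (Nat.pos_of_ne_zero h)
  obtain ⟨f, hf⟩ := exists_ne (0 : U ⟶ V)
  have := mono_of_nonzero_from_simple hf
  exact LinearMap.finrank_le_finrank_of_injective (f := f.hom.hom.hom) (injective_of_mono f)

end FDRep

namespace Representation

variable {k : Type u} {G : Type v} {V : Type u} [Field k] [Group G] [AddCommGroup V] [Module k V]

theorem exists_character_eq_sum_simple [Finite G] [NeZero (Nat.card G : k)]
    [FiniteDimensional k V] (ρ : Representation k G V) : ∃ s : Multiset (FDRep k G),
      (∀ W ∈ s, Simple W) ∧ ρ.character = (s.map FDRep.character).sum := by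
  induction hn : finrank k V using Nat.strong_induction_on generalizing V with
  | _ n ih =>
  rcases subsingleton_or_nontrivial V with hV | hV
  · exact ⟨0, by simp, funext fun g => by simp [character, Subsingleton.elim (ρ g) 0]⟩
  by_cases hirr : ρ.IsIrreducible
  · exact ⟨{FDRep.of ρ}, by simpa using FDRep.simple_of_isIrreducible ρ, by simp; rfl⟩
  obtain ⟨p, hp⟩ : ∃ p : Subrepresentation ρ, p ≠ ⊥ ∧ p ≠ ⊤ := by
    by_contra! h
    have : Nontrivial (Subrepresentation ρ) :=
      ⟨⊥, ⊤, fun h => bot_ne_top (congrArg Subrepresentation.toSubmodule h)⟩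
    exact hirr ⟨fun p => or_iff_not_imp_left.2 (h p)⟩
  obtain ⟨q, hpq⟩ := exists_isCompl p
  have hlt : ∀ r : Subrepresentation ρ, r ≠ ⊤ → finrank k r.toSubmodule < n := fun r hr =>
    hn ▸ Submodule.finrank_lt fun h => hr (Subrepresentation.toSubmodule_injective h)
  have hq : q ≠ ⊤ := fun h => hp.1 (eq_bot_of_isCompl_top (h ▸ hpq))
  obtain ⟨s, hs, hsχ⟩ := ih _ (hlt p hp.2) p.toRepresentation rfl
  obtain ⟨t, ht, htχ⟩ := ih _ (hlt q hq) q.toRepresentation rfl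
  refine ⟨s + t, fun W hW => (Multiset.mem_add.1 hW).elim (hs W) (ht W), ?_⟩
  rw [character_eq_add_of_isCompl hpq, hsχ, htχ, Multiset.map_add, Multiset.sum_add]

end Representation

namespace FDRep

open TannakaDuality.FiniteGroup

variable {k G : Type u} [Field k] [Group G] [Fintype G] [CharZero k]

theorem finrank_hom_eq_sum_of_char_eq (U V : FDRep k G) (s : Multiset (FDRep k G))
    (h : V.character = (s.map character).sum) :
    finrank k (U ⟶ V) = (s.map fun W => finrank k (U ⟶ W)).sum := by
  have : Invertible (Nat.card G : k) := invertibleOfNonzero (Nat.cast_ne_zero.2 Nat.card_pos.ne')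
  apply Nat.cast_injective (R := k)
  simp only [Nat.cast_multiset_sum, Multiset.map_map, Function.comp_def,
    ← scalar_product_char_eq_finrank_equivariant, h, Pi.multiset_sum_apply,
    Multiset.sum_map_mul_left, Multiset.sum_map_mul_right, Multiset.sum_map_sum]

theorem finrank_hom_eq_of_char_eq (U : FDRep k G) {V V' : FDRep k G}
    (h : V.character = V'.character) : finrank k (U ⟶ V) = finrank k (U ⟶ V') := by
  simpa using finrank_hom_eq_sum_of_char_eq U V {V'} (by simpa using h)

omit [CharZero k] in
theorem char_rightFDRep [DecidableEq G] (g : G) :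
    (rightFDRep : FDRep k G).character g = if g = 1 then (Fintype.card G : k) else 0 := by
  rw [rightFDRep, FDRep.character, LinearMap.trace_eq_matrix_trace k (Pi.basisFun k G),
    Matrix.trace]
  simp [Pi.single_apply]

theorem finrank_hom_rightFDRep (W : FDRep k G) : finrank k (W ⟶ rightFDRep) = finrank k W := by
  classical
  have : Invertible (Nat.card G : k) := invertibleOfNonzero (Nat.cast_ne_zero.2 Nat.card_pos.ne')
  apply Nat.cast_injective (R := k)
  rw [← scalar_product_char_eq_finrank_equivariant]
  simp_rw [char_rightFDRep]
  simp [Nat.card_eq_fintype_card]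

theorem finrank_hom_res_rightFDRep (H : Subgroup G) (U : FDRep k H) :
    finrank k (U ⟶ res H rightFDRep) = H.index * finrank k U := by
  classical
  have : Invertible (Nat.card H : k) := invertibleOfNonzero (Nat.cast_ne_zero.2 Nat.card_pos.ne')
  apply Nat.cast_injective (R := k)
  rw [← scalar_product_char_eq_finrank_equivariant]
  simp_rw [char_res, char_rightFDRep]
  have hcard : (Fintype.card G : k) = H.index * Nat.card H := by
    rw [← Nat.card_eq_fintype_card, ← H.index_mul_card, Nat.cast_mul]
  simp [hcard]
  field_simp

theorem exists_simple_finrank_le_index_mul [IsAlgClosed k] (H : Subgroup G) (U : FDRep k H)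
    [Simple U] : ∃ W : FDRep k G, Simple W ∧ finrank k U ≤ finrank k W ∧
      finrank k W ≤ H.index * finrank k U := by
  classical
  obtain ⟨s, hs, hsχ⟩ := (rightRegular : Representation k G (G → k)).exists_character_eq_sum_simple
  let μ : FDRep k G → ℕ := fun W => finrank k (U ⟶ res H W)
  have hμ : (s.map μ).sum = H.index * finrank k U := by
    rw [← finrank_hom_res_rightFDRep, finrank_hom_eq_sum_of_char_eq U _ (s.map (res H)),
      Multiset.map_map]
    · rfl
    · funext h
      exact (congrFun hsχ h).trans (by simp [Pi.multiset_sum_apply, Function.comp_def, char_res])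
  obtain ⟨W₀, hW₀, hμW₀⟩ : ∃ W₀ ∈ s, μ W₀ ≠ 0 := by
    have : (s.map μ).sum ≠ 0 :=
      hμ ▸ mul_ne_zero H.index_ne_zero_of_finite (finrank_pos_of_simple U).ne'
    simpa [Multiset.sum_eq_zero_iff] using this
  have := hs W₀ hW₀
  refine ⟨W₀, this, finrank_le_of_finrank_hom_ne_zero hμW₀, ?_⟩
  -- `W₀` occurs `dim W₀` times in `s`, and each copy contributes `μ W₀ ≥ 1`.
  calc finrank k W₀ = finrank k (W₀ ⟶ rightFDRep) := (finrank_hom_rightFDRep W₀).symm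
    _ = (s.map fun W => finrank k (W₀ ⟶ W)).sum := finrank_hom_eq_sum_of_char_eq _ _ _ hsχ
    _ ≤ (s.map μ).sum := Multiset.sum_map_le_sum_map _ _ fun W hW => ?_
    _ = H.index * finrank k U := hμ
  have := hs W hW
  rw [finrank_hom_simple_simple]
  split_ifs with hiso
  · obtain ⟨i⟩ := hiso
    have : μ W = μ W₀ := finrank_hom_eq_of_char_eq U
      (funext fun h => by rw [char_res, char_res, char_iso i])
    exact this ▸ Nat.one_le_iff_ne_zero.2 hμW₀
  · exact Nat.zero_le _

end FDRep

theorem indChar_one {G : Type} [Group G] [Fintype G] (H : Subgroup G) (β : H → ℂ) :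
    indChar H β 1 = H.index * β 1 := by
  classical
  have hβ : ∀ x : G, (if h : x⁻¹ * 1 * x ∈ H then β ⟨x⁻¹ * 1 * x, h⟩ else 0) = β 1 := fun x => by
    simp only [mul_one, inv_mul_cancel, dif_pos H.one_mem]
    rfl
  rw [indChar, Finset.sum_congr rfl fun x _ => hβ x, Finset.sum_const, Finset.card_univ,
    nsmul_eq_mul, ← Nat.card_eq_fintype_card, ← H.index_mul_card, Nat.cast_mul]
  have : (Nat.card H : ℂ) ≠ 0 := Nat.cast_ne_zero.2 Nat.card_pos.ne'
  field_simp

theorem minDeg_le {G : Type} [Group G] {χ : G → ℂ} (hχ : IsIrrChar G χ) {n : ℕ}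
    (hn : χ 1 = n) (h1 : 1 < n) : minDeg G ≤ n :=
  Nat.sInf_le ⟨h1, χ, hχ, hn⟩

theorem minDeg_le_finrank {G : Type} [Group G] (V : FDRep ℂ G) [Simple V]
    (h1 : 1 < finrank ℂ V) : minDeg G ≤ finrank ℂ V :=
  minDeg_le ⟨V, inferInstance, rfl⟩ (FDRep.char_one V) h1

theorem exists_simple_finrank_eq_minDeg {G : Type} [Group G] {χ : G → ℂ} (hχ : IsIrrChar G χ)
    {n : ℕ} (hn : χ 1 = n) (h1 : 1 < n) :
    ∃ V : FDRep ℂ G, Simple V ∧ finrank ℂ V = minDeg G ∧ 1 < minDeg G := by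
  obtain ⟨hm1, ψ, ⟨V, hV, rfl⟩, hψ⟩ :
      minDeg G ∈ {m : ℕ | 1 < m ∧ ∃ χ : G → ℂ, IsIrrChar G χ ∧ χ 1 = m} :=
    Nat.sInf_mem ⟨n, h1, χ, hχ, hn⟩
  exact ⟨V, hV, by exact_mod_cast (FDRep.char_one V).symm.trans hψ, hm1⟩

theorem stmt8_general (G : Type) [Group G] [Fintype G] (H : Subgroup G) (β : ↥H → ℂ)
    (hβ : IsIrrChar ↥H β) (d : ℕ) (hd : β 1 = (d : ℂ)) (hd1 : 1 < d)
    (hdeg : indChar H β 1 = (minDeg G : ℂ)) :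
    d = minDeg ↥H := by
  obtain ⟨U, hU, hUdim, hU1⟩ := exists_simple_finrank_eq_minDeg hβ hd hd1
  obtain ⟨W, hW, hUW, hWU⟩ := FDRep.exists_simple_finrank_le_index_mul H U
  have hG : minDeg G = H.index * d := by
    rw [indChar_one, hd] at hdeg
    exact_mod_cast hdeg.symm
  have hW1 : 1 < finrank ℂ W := (hUdim ▸ hU1).trans_le hUW
  have : H.index * d ≤ H.index * minDeg H :=
    hG ▸ hUdim ▸ (minDeg_le_finrank W hW1).trans hWU
  exact le_antisymm (Nat.le_of_mul_le_mul_left this (Nat.pos_of_ne_zero H.index_ne_zero_of_finite))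
    (minDeg_le hβ hd hd1)

/-- If `β ∈ Irr(H)` is non-linear and `β^G` is irreducible of degree `m(G)`, then
`β(1) = m(H)`, i.e. `β` is a minimal character of `H`. -/
theorem stmt8 (G : Type) [Group G] [Fintype G] (H : Subgroup G) (β : ↥H → ℂ)
    (hβ : IsIrrChar ↥H β) (d : ℕ) (hd : β 1 = (d : ℂ)) (hd1 : 1 < d)
    (hirr : IsIrrChar G (indChar H β)) (hdeg : indChar H β 1 = (minDeg G : ℂ)) :
    d = minDeg ↥H :=
  stmt8_general G H β hβ d hd hd1 hdeg

end
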